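/- Let X be a finite set of distinct points in ℙ¹×ℙ¹ over k containing points P₁×Q₁ and P₂×Q₂ with P₁ ≠ P₂ and Q₁ ≠ Q₂ such that neither P₁×Q₂ nor P₂×Q₁ belongs to X. Suppose moreover that |X_{P₁,1}| = 1 and |X_{Q₁,2}| > 1. Then deg_X(P₁×Q₁) contains at least two elements. -/

import Mathlib

/-- `ℙ¹` over `k`, as the projectivization of `k²`. -/
abbrev Proj1 (k : Type*) [Field k] := Projectivization k (Fin 2 → k)

/-- The bigraded coordinate ring `R = k[x₀,x₁,y₀,y₁]` of `ℙ¹ × ℙ¹`,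
with the `x` variables indexed by `Sum.inl` and the `y` variables by `Sum.inr`. -/
abbrev BiPoly (k : Type*) [Field k] := MvPolynomial (Fin 2 ⊕ Fin 2) k

variable {k : Type*} [Field k]

/-- `F` is bihomogeneous of bidegree `d = (d₁, d₂)`: every monomial of `F` has total degree
`d₁` in `x₀,x₁` and total degree `d₂` in `y₀,y₁`. -/
def IsBihomogeneous (F : BiPoly k) (d : ℕ × ℕ) : Prop :=
  ∀ m ∈ F.support,
    (∑ i : Fin 2, m (Sum.inl i)) = d.1 ∧ (∑ i : Fin 2, m (Sum.inr i)) = d.2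

/-- `F` vanishes at the point `P` of `ℙ¹ × ℙ¹`, i.e. at every pair of representatives. -/
def VanishesAt (F : BiPoly k) (P : Proj1 k × Proj1 k) : Prop :=
  ∀ (p q : Fin 2 → k) (hp : p ≠ 0) (hq : q ≠ 0),
    Projectivization.mk k p hp = P.1 → Projectivization.mk k q hq = P.2 →
    MvPolynomial.eval (Sum.elim p q) F = 0

/-- `F` is a separator of `P` in `X` of bidegree `d`: it is bihomogeneous of bidegree `d`,
does not vanish at `P`, and vanishes at every other point of `X`. -/
def IsSeparator (X : Finset (Proj1 k × Proj1 k)) (P : Proj1 k × Proj1 k)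
    (F : BiPoly k) (d : ℕ × ℕ) : Prop :=
  IsBihomogeneous F d ∧ ¬ VanishesAt F P ∧ ∀ Q ∈ X, Q ≠ P → VanishesAt F Q

/-- The set of bidegrees of separators of `P` in `X`. -/
def sepDegrees (X : Finset (Proj1 k × Proj1 k)) (P : Proj1 k × Proj1 k) : Set (ℕ × ℕ) :=
  {d | ∃ F : BiPoly k, IsSeparator X P F d}

/-- `deg_X(P)`: the set of minimal elements, with respect to the componentwise partial
order on `ℕ × ℕ`, of the set of bidegrees of separators of `P` in `X`. -/
def degSet (X : Finset (Proj1 k × Proj1 k)) (P : Proj1 k × Proj1 k) : Set (ℕ × ℕ) :=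
  {d | d ∈ sepDegrees X P ∧ ∀ e ∈ sepDegrees X P, e ≤ d → e = d}

/-- The ideal `I_X` of all polynomials vanishing at (every representative of)
every point of `X`. -/
noncomputable def vanishingIdeal (X : Finset (Proj1 k × Proj1 k)) : Ideal (BiPoly k) where
  carrier := {F | ∀ P ∈ X, VanishesAt F P}
  zero_mem' := by
    intro P _ p q hp hq _ _
    simp
  add_mem' := by
    intro F G hF hG P hP p q hp hq h1 h2
    have h := hF P hP p q hp hq h1 h2
    have h' := hG P hP p q hp hq h1 h2
    simp [h, h']
  smul_mem' := by
    intro c F hF P hP p q hp hq h1 h2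
    have h := hF P hP p q hp hq h1 h2
    simp [smul_eq_mul, h]

/-- Property (*): whenever `P×Q, P'×Q' ∈ X` with `P ≠ P'` and `Q ≠ Q'`, at least one of
`P×Q'` and `P'×Q` is in `X`. -/
def PropertyStar (X : Finset (Proj1 k × Proj1 k)) : Prop :=
  ∀ P Q P' Q' : Proj1 k, (P, Q) ∈ X → (P', Q') ∈ X → P ≠ P' → Q ≠ Q' →
    (P, Q') ∈ X ∨ (P', Q) ∈ X

/-- The depth of a commutative ring `A` with respect to an ideal `m`: the supremum of the
lengths of regular sequences on `A` consisting of elements of `m`. -/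
noncomputable def depthWrt (A : Type*) [CommRing A] (m : Ideal A) : ℕ :=
  sSup {n | ∃ rs : List A, rs.length = n ∧ (∀ r ∈ rs, r ∈ m) ∧
    RingTheory.Sequence.IsRegular A rs}

/-- The irrelevant maximal ideal `(x₀,x₁,y₀,y₁)` of `R/I_X`. -/
noncomputable def irrelevantIdeal (X : Finset (Proj1 k × Proj1 k)) :
    Ideal (BiPoly k ⧸ vanishingIdeal X) :=
  (Ideal.span (Set.range (MvPolynomial.X : (Fin 2 ⊕ Fin 2) → BiPoly k))).map
    (Ideal.Quotient.mk (vanishingIdeal X))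

/-- `X` is arithmetically Cohen–Macaulay: `depth (R/I_X) = 2`. -/
def IsACM (X : Finset (Proj1 k × Proj1 k)) : Prop :=
  depthWrt (BiPoly k ⧸ vanishingIdeal X) (irrelevantIdeal X) = 2

open Classical in
/-- The number of points of `X` with first coordinate `P` (the cardinality of `X_{P,1}`). -/
noncomputable def fiber1Card (X : Finset (Proj1 k × Proj1 k)) (P : Proj1 k) : ℕ :=
  (X.filter fun T => T.1 = P).card

open Classical in
/-- The number of points of `X` with second coordinate `Q` (the cardinality of `X_{Q,2}`). -/
noncomputable def fiber2Card (X : Finset (Proj1 k × Proj1 k)) (Q : Proj1 k) : ℕ :=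
  (X.filter fun T => T.2 = Q).card

open Classical in
/-- The number of distinct first coordinates of points of `X`, i.e. `|π₁(X)|`. -/
noncomputable def proj1Card (X : Finset (Proj1 k × Proj1 k)) : ℕ :=
  (X.image Prod.fst).card

open Classical in
/-- The number of distinct second coordinates of points of `X`, i.e. `|π₂(X)|`. -/
noncomputable def proj2Card (X : Finset (Proj1 k × Proj1 k)) : ℕ :=
  (X.image Prod.snd).card


/-!
The point `P₁×Q₁` is alone on its vertical line, so the product of the linear forms in `x`
cutting out the other vertical lines through points of `X` separates it, in bidegree `(a, 0)`
with `a = |π₁(X)| - 1`. A nonzero binary form of degree `c` has at most `c` zeros in `ℙ¹`, so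
there is no separator of bidegree `(c, 0)` with `c < a`, and `(a, 0)` is minimal. Replacing the
line `x = P₂` by the horizontal lines through the points of `X` on it (none of which is
`y = Q₁`, as `P₂×Q₁ ∉ X`) gives a separator of bidegree `(a - 1, b)`; a minimal bidegree below
it has first coordinate `< a`, hence differs from `(a, 0)`.
-/

open MvPolynomial Projectivization

theorem Projectivization.mk_eq_mk_iff_det_eq_zero {p w : Fin 2 → k} (hp : p ≠ 0) (hw : w ≠ 0) :
    mk k p hp = mk k w hw ↔ (Matrix.of ![p, w]).det = 0 := by
  rw [mk_eq_mk_iff', ← not_iff_not, ← Ne, ← isUnit_iff_ne_zero,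
    ← Matrix.isUnit_iff_isUnit_det, ← Matrix.linearIndependent_rows_iff_isUnit]
  change _ ↔ LinearIndependent k ![p, w]
  rw [LinearIndependent.pair_symm_iff, LinearIndependent.pair_iff' hw]
  exact not_exists

theorem Projectivization.exists_mk_eq_of_ne (P : Proj1 k) (hP : P ≠ mk k ![1, 0] (by simp)) :
    ∃ t : k, mk k ![t, 1] (by simp) = P := by
  have h1 : P.rep 1 ≠ 0 := by
    intro h
    refine hP ?_
    conv_lhs => rw [← mk_rep P]
    rw [mk_eq_mk_iff_det_eq_zero, Matrix.det_fin_two]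
    simp [h]
  refine ⟨P.rep 0 / P.rep 1, ?_⟩
  conv_rhs => rw [← mk_rep P]
  rw [mk_eq_mk_iff_det_eq_zero, Matrix.det_fin_two]
  simp [div_mul_cancel₀ _ h1]

theorem Finsupp.weight_one_fin_two (d : Fin 2 →₀ ℕ) : Finsupp.weight 1 d = d 0 + d 1 := by
  simp [Finsupp.weight_apply, Finsupp.sum_fintype, Fin.sum_univ_two]

namespace MvPolynomial

theorem IsHomogeneous.isWeightedHomogeneous_rename {σ τ M R : Type*} [CommSemiring R]
    [AddCommMonoid M] {q : MvPolynomial σ R} {c : ℕ} {w : τ → M} {f : σ → τ} {e : M}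
    (hw : ∀ i, w (f i) = e) (hq : q.IsHomogeneous c) :
    (rename f q).IsWeightedHomogeneous w (c • e) := by
  induction hq using IsWeightedHomogeneous.induction_on with
  | zero => simp [isWeightedHomogeneous_zero]
  | add p r _ _ hp hr => rw [map_add]; exact hp.add hr
  | monomial d r hd =>
    rw [rename_monomial]
    refine isWeightedHomogeneous_monomial _ _ _ ?_
    rw [← hd, Finsupp.weight_apply, Finsupp.weight_apply,
      Finsupp.sum_mapDomain_index (by simp) (by simp [add_smul])]
    simp [hw, Finsupp.sum, Finset.sum_smul]

variable {q : MvPolynomial (Fin 2) k} {n : ℕ}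

theorem eval_aeval_X_one (q : MvPolynomial (Fin 2) k) (t : k) :
    (aeval ![(Polynomial.X : Polynomial k), 1] q).eval t = eval ![t, 1] q := by
  induction q using MvPolynomial.induction_on with
  | C a => simp
  | add p r hp hr => simp [hp, hr]
  | mul_X p i hp => fin_cases i <;> simp [hp]

theorem aeval_X_one_monomial (d : Fin 2 →₀ ℕ) (r : k) :
    aeval ![(Polynomial.X : Polynomial k), 1] (monomial d r) =
      Polynomial.C r * Polynomial.X ^ d 0 := by
  simp [aeval_monomial, Finsupp.prod_fintype]

theorem IsHomogeneous.natDegree_aeval_X_one_le (hq : q.IsHomogeneous n) :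
    (MvPolynomial.aeval ![(Polynomial.X : Polynomial k), 1] q).natDegree ≤ n := by
  induction hq using IsWeightedHomogeneous.induction_on with
  | zero => simp
  | add p r _ _ hp hr =>
    rw [map_add]
    exact (Polynomial.natDegree_add_le _ _).trans (max_le hp hr)
  | monomial d r hd =>
    rw [Finsupp.weight_one_fin_two] at hd
    rw [aeval_X_one_monomial]
    exact (Polynomial.natDegree_C_mul_X_pow_le r _).trans (by omega)

theorem IsHomogeneous.coeff_aeval_X_one (hq : q.IsHomogeneous n) :
    (MvPolynomial.aeval ![(Polynomial.X : Polynomial k), 1] q).coeff n = eval ![1, 0] q := by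
  induction hq using IsWeightedHomogeneous.induction_on with
  | zero => simp
  | add p r _ _ hp hr => simp [hp, hr]
  | monomial d r hd =>
    rw [Finsupp.weight_one_fin_two] at hd
    rw [aeval_X_one_monomial, Polynomial.coeff_C_mul_X_pow, eval_monomial,
      Finsupp.prod_fintype _ _ (by simp)]
    rcases Nat.eq_zero_or_pos (d 1) with h | h
    · simp [h, ← hd]
    · simp [zero_pow h.ne', show n ≠ d 0 by omega]

/-- The zeros of `q` other than `[1 : 0]` are the roots of `f = q(t, 1)`, and `[1 : 0]` is a zero
exactly when the coefficient of `tⁿ` in `f` vanishes, i.e. when `deg f < n`. -/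
theorem IsHomogeneous.card_le_of_eval_eq_zero (hq : q.IsHomogeneous n) (hq0 : q ≠ 0)
    (S : Finset (Proj1 k)) (hS : ∀ p (hp : p ≠ 0), mk k p hp ∈ S → eval p q = 0) :
    S.card ≤ n := by
  classical
  set f := MvPolynomial.aeval ![(Polynomial.X : Polynomial k), 1] q with hf
  have hf0 : f ≠ 0 := by
    intro h
    rw [← Polynomial.homogenize_eq_of_isHomogeneous hq hf.symm, h, Polynomial.homogenize_zero]
      at hq0
    exact hq0 rfl
  set infty : Proj1 k := mk k ![1, 0] (by simp)
  have hfinite : (S.erase infty).card ≤ f.natDegree :=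
    calc (S.erase infty).card
        ≤ (f.roots.toFinset.image fun t => mk k ![t, 1] (by simp)).card := by
          refine Finset.card_le_card fun P hP => ?_
          obtain ⟨hP, hPS⟩ := Finset.mem_erase.1 hP
          obtain ⟨t, rfl⟩ := exists_mk_eq_of_ne P hP
          refine Finset.mem_image_of_mem _ ?_
          rw [Multiset.mem_toFinset, Polynomial.mem_roots hf0, Polynomial.IsRoot,
            hf, eval_aeval_X_one]
          exact hS _ _ hPS
      _ ≤ f.roots.toFinset.card := Finset.card_image_le
      _ ≤ Multiset.card f.roots := Multiset.toFinset_card_le _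
      _ ≤ f.natDegree := Polynomial.card_roots' f
  by_cases hinfty : infty ∈ S
  · have hlt : f.natDegree < n := by
      refine hq.natDegree_aeval_X_one_le.lt_of_ne fun h => hf0 ?_
      rw [← Polynomial.leadingCoeff_eq_zero, Polynomial.leadingCoeff, h, hf,
        hq.coeff_aeval_X_one]
      exact hS _ _ hinfty
    have := Finset.card_erase_add_one hinfty
    omega
  · rw [Finset.erase_eq_of_notMem hinfty] at hfinite
    exact hfinite.trans hq.natDegree_aeval_X_one_le

end MvPolynomial

def bidegWeight : Fin 2 ⊕ Fin 2 → ℕ × ℕ := Sum.elim (fun _ => (1, 0)) (fun _ => (0, 1))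

theorem weight_bidegWeight (m : Fin 2 ⊕ Fin 2 →₀ ℕ) :
    Finsupp.weight bidegWeight m = (∑ i, m (Sum.inl i), ∑ i, m (Sum.inr i)) := by
  simp [Finsupp.weight_apply, Finsupp.sum_fintype, bidegWeight, Prod.ext_iff]

theorem isBihomogeneous_iff_isWeightedHomogeneous {F : BiPoly k} {d : ℕ × ℕ} :
    IsBihomogeneous F d ↔ F.IsWeightedHomogeneous bidegWeight d := by
  simp only [IsBihomogeneous, IsWeightedHomogeneous, weight_bidegWeight, Prod.ext_iff,
    mem_support_iff]

theorem IsBihomogeneous.isHomogeneous {F : BiPoly k} {a b : ℕ} (hF : IsBihomogeneous F (a, b)) :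
    F.IsHomogeneous (a + b) := by
  intro m hm
  obtain ⟨ha, hb⟩ := hF m (mem_support_iff.2 hm)
  simp only [Finsupp.weight_apply, Pi.one_apply, smul_eq_mul, mul_one]
  rw [Finsupp.sum_fintype _ _ (by simp), Fintype.sum_sum_type, ha, hb]

theorem IsBihomogeneous.exists_rename_inl {F : BiPoly k} {c : ℕ} (hF : IsBihomogeneous F (c, 0)) :
    ∃ q : MvPolynomial (Fin 2) k, q.IsHomogeneous c ∧ rename Sum.inl q = F := by
  have hvars : (F.vars : Set (Fin 2 ⊕ Fin 2)) ⊆ Set.range Sum.inl := by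
    rintro (i | i) hi
    · exact ⟨i, rfl⟩
    · obtain ⟨m, hm, hi⟩ := (mem_vars_iff_mem_support _).1 hi
      have := Finset.sum_eq_zero_iff.1 (hF m hm).2 i (Finset.mem_univ _)
      exact absurd this (Finsupp.mem_support_iff.1 hi)
  obtain ⟨q, rfl⟩ := exists_rename_eq_of_vars_subset_range F Sum.inl Sum.inl_injective hvars
  refine ⟨q, ?_, rfl⟩
  rw [← IsHomogeneous.rename_isHomogeneous_iff Sum.inl_injective]
  simpa using hF.isHomogeneous

noncomputable def lineForm (D : Proj1 k) : MvPolynomial (Fin 2) k :=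
  C (D.rep 1) * X 0 - C (D.rep 0) * X 1

theorem isHomogeneous_prod_lineForm (s : Finset (Proj1 k)) :
    (∏ D ∈ s, lineForm D).IsHomogeneous s.card := by
  simpa using IsHomogeneous.prod s lineForm (fun _ => 1) fun D _ =>
    ((isHomogeneous_X k 0).C_mul _).sub ((isHomogeneous_X k 1).C_mul _)

theorem eval_prod_lineForm_eq_zero_iff (s : Finset (Proj1 k)) {p : Fin 2 → k} (hp : p ≠ 0) :
    eval p (∏ D ∈ s, lineForm D) = 0 ↔ mk k p hp ∈ s := by
  have (D : Proj1 k) : eval p (lineForm D) = 0 ↔ mk k p hp = D := by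
    rw [← mk_rep D, mk_eq_mk_iff_det_eq_zero, Matrix.det_fin_two, lineForm]
    simp [mul_comm]
  simp [map_prod, Finset.prod_eq_zero_iff, this]

theorem eval_sumElim_rename_mul_rename (f g : MvPolynomial (Fin 2) k) (p r : Fin 2 → k) :
    eval (Sum.elim p r) (rename Sum.inl f * rename Sum.inr g) = eval p f * eval r g := by
  simp [eval_rename]

theorem mem_sepDegrees_of_forall_mem_or_mem {X : Finset (Proj1 k × Proj1 k)}
    {P : Proj1 k × Proj1 k} {A B : Finset (Proj1 k)} (hA : P.1 ∉ A) (hB : P.2 ∉ B)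
    (hX : ∀ T ∈ X, T ≠ P → T.1 ∈ A ∨ T.2 ∈ B) : (A.card, B.card) ∈ sepDegrees X P := by
  refine ⟨rename Sum.inl (∏ D ∈ A, lineForm D) * rename Sum.inr (∏ E ∈ B, lineForm E),
    ?_, fun hvan => ?_, fun T hT hTP p r hp hr hpT hrT => ?_⟩
  · rw [isBihomogeneous_iff_isWeightedHomogeneous]
    simpa using ((isHomogeneous_prod_lineForm A).isWeightedHomogeneous_rename
      (w := bidegWeight) (f := Sum.inl) (e := (1, 0)) fun _ => rfl).mul
      ((isHomogeneous_prod_lineForm B).isWeightedHomogeneous_rename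
      (w := bidegWeight) (f := Sum.inr) (e := (0, 1)) fun _ => rfl)
  · have := hvan _ _ P.1.rep_nonzero P.2.rep_nonzero (mk_rep _) (mk_rep _)
    rw [eval_sumElim_rename_mul_rename, mul_eq_zero,
      eval_prod_lineForm_eq_zero_iff _ P.1.rep_nonzero,
      eval_prod_lineForm_eq_zero_iff _ P.2.rep_nonzero, mk_rep, mk_rep] at this
    exact this.elim hA hB
  · rw [eval_sumElim_rename_mul_rename, mul_eq_zero, eval_prod_lineForm_eq_zero_iff _ hp,
      eval_prod_lineForm_eq_zero_iff _ hr, hpT, hrT]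
    exact hX T hT hTP

theorem card_erase_image_fst_le [DecidableEq (Proj1 k)] {X : Finset (Proj1 k × Proj1 k)}
    {P : Proj1 k × Proj1 k} {c : ℕ} (h : (c, 0) ∈ sepDegrees X P) :
    ((X.image Prod.fst).erase P.1).card ≤ c := by
  obtain ⟨F, hF, hFP, hFX⟩ := h
  obtain ⟨q, hq, rfl⟩ := hF.exists_rename_inl
  refine hq.card_le_of_eval_eq_zero ?_ _ fun p hp hpA => ?_
  · rintro rfl
    exact hFP fun _ _ _ _ _ _ => by simp
  · obtain ⟨hpP, T, hT, hTp⟩ := by simpa only [Finset.mem_erase, Finset.mem_image] using hpA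
    have := hFX T hT (by rintro rfl; exact hpP hTp.symm) p T.2.rep hp T.2.rep_nonzero hTp.symm
      (mk_rep _)
    simpa [eval_rename] using this

theorem mem_degSet_iff {X : Finset (Proj1 k × Proj1 k)} {P : Proj1 k × Proj1 k} {d : ℕ × ℕ} :
    d ∈ degSet X P ↔ Minimal (· ∈ sepDegrees X P) d := by
  simp only [degSet, minimal_iff, Set.mem_ofPred_eq, eq_comm]

theorem card_erase_image_fst_zero_mem_degSet [DecidableEq (Proj1 k)]
    {X : Finset (Proj1 k × Proj1 k)} {P : Proj1 k × Proj1 k}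
    (hP : ∀ T ∈ X, T.1 = P.1 → T = P) :
    (((X.image Prod.fst).erase P.1).card, 0) ∈ degSet X P := by
  have hsep : (((X.image Prod.fst).erase P.1).card, 0) ∈ sepDegrees X P := by
    simpa using mem_sepDegrees_of_forall_mem_or_mem (B := ∅) (Finset.notMem_erase _ _)
      (Finset.notMem_empty _) fun T hT hTP =>
        Or.inl (Finset.mem_erase.2 ⟨fun h => hTP (hP T hT h), Finset.mem_image_of_mem _ hT⟩)
  refine mem_degSet_iff.2 ⟨hsep, fun ⟨a, b⟩ hab hle => ?_⟩
  obtain rfl : b = 0 := Nat.le_zero.1 (Prod.mk_le_mk.1 hle).2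
  exact Prod.mk_le_mk.2 ⟨card_erase_image_fst_le hab, le_rfl⟩

theorem exists_mem_degSet_fst_lt [DecidableEq (Proj1 k)] {X : Finset (Proj1 k × Proj1 k)}
    {P : Proj1 k × Proj1 k} {P₂ : Proj1 k} (hP : ∀ T ∈ X, T.1 = P.1 → T = P)
    (hP₂ : P₂ ∈ (X.image Prod.fst).erase P.1) (hP₂P : (P₂, P.2) ∉ X) :
    ∃ d ∈ degSet X P, d.1 < ((X.image Prod.fst).erase P.1).card := by
  have hsep : ((((X.image Prod.fst).erase P.1).erase P₂).card,
      ((X.filter (·.1 = P₂)).image Prod.snd).card) ∈ sepDegrees X P := by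
    refine mem_sepDegrees_of_forall_mem_or_mem
      (fun h => Finset.notMem_erase _ _ (Finset.mem_of_mem_erase h)) ?_ fun T hT hTP => ?_
    · simp only [Finset.mem_image, Finset.mem_filter, not_exists, not_and]
      rintro ⟨_, Q⟩ ⟨hT, rfl⟩ rfl
      exact hP₂P hT
    · by_cases hT₂ : T.1 = P₂
      · exact Or.inr (Finset.mem_image_of_mem _ (Finset.mem_filter.2 ⟨hT, hT₂⟩))
      · exact Or.inl (Finset.mem_erase.2 ⟨hT₂, Finset.mem_erase.2 ⟨fun h => hTP (hP T hT h),
          Finset.mem_image_of_mem _ hT⟩⟩)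
  obtain ⟨d, hd, hmin⟩ := exists_minimal_le_of_wellFoundedLT _ _ hsep
  exact ⟨d, mem_degSet_iff.2 hmin, hd.1.trans_lt (Finset.card_erase_lt_of_mem hP₂)⟩

theorem degree_nontrivial_of_not_star_case_three_general
    (X : Finset (Proj1 k × Proj1 k)) (P₁ Q₁ P₂ Q₂ : Proj1 k)
    (h₁ : (P₁, Q₁) ∈ X) (h₂ : (P₂, Q₂) ∈ X) (hP : P₁ ≠ P₂) (h₂₁ : (P₂, Q₁) ∉ X)
    (hb : fiber1Card X P₁ = 1) :
    (degSet X (P₁, Q₁)).Nontrivial := by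
  classical
  have hfiber : ∀ T ∈ X, T.1 = P₁ → T = (P₁, Q₁) := fun T hT hT₁ =>
    Finset.card_le_one.1 hb.le T (Finset.mem_filter.2 ⟨hT, hT₁⟩) _ (Finset.mem_filter.2 ⟨h₁, rfl⟩)
  obtain ⟨d, hd, hlt⟩ := exists_mem_degSet_fst_lt (P := (P₁, Q₁)) hfiber
    (Finset.mem_erase.2 ⟨hP.symm, Finset.mem_image_of_mem Prod.fst h₂⟩) h₂₁
  exact ⟨_, card_erase_image_fst_zero_mem_degSet hfiber, d, hd,
    fun h => hlt.ne (congrArg Prod.fst h).symm⟩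

/-- Case 3: if `X` fails property (*) at `P₁×Q₁`, `P₂×Q₂` and moreover
`|X_{P₁,1}| = 1` and `|X_{Q₁,2}| > 1`, then `deg_X(P₁×Q₁)` has at least two elements. -/
theorem degree_nontrivial_of_not_star_case_three [IsAlgClosed k] [CharZero k]
    (X : Finset (Proj1 k × Proj1 k)) (P₁ Q₁ P₂ Q₂ : Proj1 k)
    (h₁ : (P₁, Q₁) ∈ X) (h₂ : (P₂, Q₂) ∈ X) (hP : P₁ ≠ P₂) (hQ : Q₁ ≠ Q₂)
    (h₁₂ : (P₁, Q₂) ∉ X) (h₂₁ : (P₂, Q₁) ∉ X)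
    (hb : fiber1Card X P₁ = 1) (ha : 1 < fiber2Card X Q₁) :
    (degSet X (P₁, Q₁)).Nontrivial :=
  degree_nontrivial_of_not_star_case_three_general X P₁ Q₁ P₂ Q₂ h₁ h₂ hP h₂₁ hb
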